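/- arXiv:2407.01793 — 2 statements merged into one kernel-verified Lean document; each statement's English description precedes it below -/
import Mathlib

section
/- Let d ≥ 2 be an integer and k0 > 0. Then |κ(x)| ≥ √(k0·|k0 − |x||) for every x ∈ ℝ^{d−1}, and the function x ↦ 1/κ(x) is locally integrable on ℝ^{d−1}: for every R > 0, ∫_{|x| < R} 1/|κ(x)| dx < ∞. -/
/-!
Since `k0 ≤ k0 + |x|`, we have `k0 · |k0 - |x|| ≤ |k0² - |x|²| = |κ(x)|²`, so `1/|κ|` is dominated
by the radial profile `t ↦ (k0 · |k0 - t|)^{-1/2}` evaluated at `t = |x|`. In polar coordinates the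
integral of a radial function over a ball of `ℝ^{d-1}` is a one-dimensional integral with the
bounded weight `r^{d-2}`, and `|t - k0|^{-1/2}` is locally integrable on `ℝ`.
-/

open MeasureTheory

noncomputable section

/-- The function `κ(x) = √(k0² - |x|²)` for `|x| ≤ k0` and `κ(x) = i√(|x|² - k0²)`
for `|x| > k0`. -/
def kappa (k0 : ℝ) {m : ℕ} (x : EuclideanSpace ℝ (Fin m)) : ℂ :=
  if ‖x‖ ≤ k0 then (Real.sqrt (k0 ^ 2 - ‖x‖ ^ 2) : ℂ)
  else Complex.I * (Real.sqrt (‖x‖ ^ 2 - k0 ^ 2) : ℂ)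

open Set Metric

theorem integrableOn_ball_fun_norm {E F : Type*} [NormedAddCommGroup E] [NormedSpace ℝ E]
    [FiniteDimensional ℝ E] [Nontrivial E] [MeasurableSpace E] [BorelSpace E]
    [NormedAddCommGroup F] [NormedSpace ℝ F] (μ : Measure E) [μ.IsAddHaarMeasure]
    {f : ℝ → F} {R : ℝ} (hf : IntegrableOn f (Ioo 0 R)) :
    IntegrableOn (fun x : E => f ‖x‖) (ball 0 R) μ :=
  (integrableOn_fun_norm_addHaar μ).2 <|
    hf.continuousOn_smul_of_subset (by fun_prop) isCompact_Icc measurableSet_Ioo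
      Ioo_subset_Icc_self

theorem locallyIntegrable_inv_sqrt_abs : LocallyIntegrable fun t : ℝ => (√|t|)⁻¹ := by
  refine locallyIntegrable_of_norm_le_rpow (C := 1) (α := 2⁻¹) (by simp) (by norm_num)
    (ae_of_all _ fun t => ?_) (by fun_prop)
  rw [Real.sqrt_eq_rpow, ← Real.rpow_neg (abs_nonneg t), one_mul, Real.norm_eq_abs,
    abs_of_nonneg (by positivity)]
  norm_num

theorem locallyIntegrable_inv_sqrt_abs_sub (c : ℝ) :
    LocallyIntegrable fun t : ℝ => (√|t - c|)⁻¹ := by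
  have h := locallyIntegrable_inv_sqrt_abs
  rw [← map_sub_right_eq_self volume c] at h
  exact (locallyIntegrable_map_homeomorph (Homeomorph.subRight c)).1 h

theorem locallyIntegrable_inv_sqrt_mul_abs_sub (k0 : ℝ) :
    LocallyIntegrable fun t : ℝ => (√(k0 * |k0 - t|))⁻¹ := by
  have h : (fun t : ℝ => (√(k0 * |k0 - t|))⁻¹) = (√k0)⁻¹ • fun t => (√|t - k0|)⁻¹ := by
    ext t
    rw [Pi.smul_apply, smul_eq_mul, Real.sqrt_mul' k0 (abs_nonneg _), abs_sub_comm, mul_inv]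
  exact h ▸ (locallyIntegrable_inv_sqrt_abs_sub k0).smul (√k0)⁻¹

theorem sqrt_mul_abs_sub_norm_le_norm_kappa (k0 : ℝ) {m : ℕ} (x : EuclideanSpace ℝ (Fin m)) :
    √(k0 * |k0 - ‖x‖|) ≤ ‖kappa k0 x‖ := by
  have hx := norm_nonneg x
  unfold kappa
  split_ifs with h
  · rw [Complex.norm_real, Real.norm_of_nonneg (Real.sqrt_nonneg _),
      abs_of_nonneg (by linarith)]
    exact Real.sqrt_le_sqrt (by nlinarith)
  · rw [norm_mul, Complex.norm_I, one_mul, Complex.norm_real,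
      Real.norm_of_nonneg (Real.sqrt_nonneg _), abs_of_neg (by linarith)]
    exact Real.sqrt_le_sqrt (by nlinarith)

theorem inv_norm_kappa_le {k0 : ℝ} (hk0 : 0 < k0) {m : ℕ} (x : EuclideanSpace ℝ (Fin m)) :
    ‖kappa k0 x‖⁻¹ ≤ (√(k0 * |k0 - ‖x‖|))⁻¹ := by
  by_cases hx : ‖x‖ = k0
  · simp [kappa, hx]
  · exact inv_anti₀ (Real.sqrt_pos.2 (mul_pos hk0 (abs_pos.2 (sub_ne_zero.2 (Ne.symm hx)))))
      (sqrt_mul_abs_sub_norm_le_norm_kappa k0 x)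

theorem measurable_kappa (k0 : ℝ) (m : ℕ) :
    Measurable (kappa k0 : EuclideanSpace ℝ (Fin m) → ℂ) :=
  Measurable.ite (measurableSet_le measurable_norm measurable_const) (by fun_prop) (by fun_prop)

/-- `|κ(x)| ≥ √(k0·|k0 - |x||)` and `1/κ` is locally integrable on `ℝ^{d-1}`. -/
theorem kappa_inv_locally_integrable (d : ℕ) (hd : 2 ≤ d) (k0 : ℝ) (hk0 : 0 < k0) :
    (∀ x : EuclideanSpace ℝ (Fin (d - 1)),
        Real.sqrt (k0 * |k0 - ‖x‖|) ≤ ‖kappa k0 x‖) ∧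
    (∀ R > (0 : ℝ),
      IntegrableOn (fun x : EuclideanSpace ℝ (Fin (d - 1)) => (‖kappa k0 x‖)⁻¹)
        (Metric.ball 0 R)) := by
  refine ⟨sqrt_mul_abs_sub_norm_le_norm_kappa k0, fun R _ => ?_⟩
  have : NeZero (d - 1) := ⟨by omega⟩
  have hprofile : IntegrableOn (fun t : ℝ => (√(k0 * |k0 - t|))⁻¹) (Ioo 0 R) :=
    ((locallyIntegrable_inv_sqrt_mul_abs_sub k0).integrableOn_isCompact isCompact_Icc).mono_set
      Ioo_subset_Icc_self
  refine (integrableOn_ball_fun_norm volume hprofile).mono'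
    (measurable_kappa k0 _).norm.inv.aestronglyMeasurable.restrict (ae_of_all _ fun x => ?_)
  rw [Real.norm_of_nonneg (inv_nonneg.2 (norm_nonneg _))]
  exact inv_norm_kappa_le hk0 x

end
end

section
/- Under the stated setup for the map T, the map T satisfies the Luzin N property on U: if E ⊂ U has d-dimensional Lebesgue measure zero (viewing U ⊂ ℝ^{d−1} × ℝ ≅ ℝ^d), then the image T(E) ⊂ ℝ^d has Lebesgue measure zero. -/
open MeasureTheory

noncomputable section

/-- The first `n` coordinates of `z ∈ ℝ^{n+1}`. -/
def xpart {n : ℕ} (z : EuclideanSpace ℝ (Fin (n + 1))) : EuclideanSpace ℝ (Fin n) :=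
  (EuclideanSpace.equiv (Fin n) ℝ).symm fun i => z i.castSucc

/-- The last coordinate of `z ∈ ℝ^{n+1}`. -/
def tlast {n : ℕ} (z : EuclideanSpace ℝ (Fin (n + 1))) : ℝ := z (Fin.last n)

/-- The vector `(x, c) ∈ ℝ^{n+1}` obtained by appending `c ∈ ℝ` to `x ∈ ℝ^n`. -/
def hvec {n : ℕ} (x : EuclideanSpace ℝ (Fin n)) (c : ℝ) : EuclideanSpace ℝ (Fin (n + 1)) :=
  (EuclideanSpace.equiv (Fin (n + 1)) ℝ).symm (Fin.snoc ((EuclideanSpace.equiv (Fin n) ℝ) x) c)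

/-- The coordinate transformation `T(x,t) = R(t)·(h(x,t) - k0(t)·s(t))`,
with `h(x,t) = (x, √(k0(t)² - |x|²))`, viewed as a map `ℝ^{n+1} → ℝ^{n+1}` via the
identification `ℝ^n × ℝ ≅ ℝ^{n+1}`. -/
def Tmap {n : ℕ} (k0 : ℝ → ℝ) (s : ℝ → EuclideanSpace ℝ (Fin (n + 1)))
    (R : ℝ → EuclideanSpace ℝ (Fin (n + 1)) →L[ℝ] EuclideanSpace ℝ (Fin (n + 1)))
    (z : EuclideanSpace ℝ (Fin (n + 1))) : EuclideanSpace ℝ (Fin (n + 1)) :=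
  R (tlast z)
    (hvec (xpart z) (Real.sqrt ((k0 (tlast z)) ^ 2 - ‖xpart z‖ ^ 2)) -
      k0 (tlast z) • s (tlast z))

/-- The parameter domain `U = {(x,t) : t ∈ [0,L], |x| < k0(t)}` viewed inside `ℝ^{n+1}`. -/
def Uset {n : ℕ} (L : ℝ) (k0 : ℝ → ℝ) : Set (EuclideanSpace ℝ (Fin (n + 1))) :=
  {z | tlast z ∈ Set.Icc 0 L ∧ ‖xpart z‖ < k0 (tlast z)}

lemma differentiable_xpart {n : ℕ} : Differentiable ℝ (xpart (n := n)) := by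
  refine (differentiable_euclidean (𝕜 := ℝ) (f := xpart (n := n))).mpr fun i => ?_
  exact (EuclideanSpace.proj (𝕜 := ℝ) (i.castSucc : Fin (n+1))).differentiable

lemma differentiable_tlast {n : ℕ} : Differentiable ℝ (tlast (n := n)) :=
  (EuclideanSpace.proj (𝕜 := ℝ) (Fin.last n)).differentiable

lemma differentiableAt_hvec_comp {n : ℕ} {f : EuclideanSpace ℝ (Fin (n+1)) → EuclideanSpace ℝ (Fin n)}
    {g : EuclideanSpace ℝ (Fin (n+1)) → ℝ} {z : EuclideanSpace ℝ (Fin (n+1))}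
    (hf : DifferentiableAt ℝ f z) (hg : DifferentiableAt ℝ g z) :
    DifferentiableAt ℝ (fun w => hvec (f w) (g w)) z := by
  refine (differentiableAt_euclidean (𝕜 := ℝ) (f := fun w => hvec (f w) (g w)) (y := z)).mpr fun i => ?_
  induction i using Fin.lastCases with
  | last =>
    have : (fun w => hvec (f w) (g w) (Fin.last n)) = g := by
      funext w; simp [hvec]
    rw [this]; exact hg
  | cast j =>
    have : (fun w => hvec (f w) (g w) j.castSucc) = fun w => f w j := by
      funext w; simp [hvec]
    rw [this]; exact (differentiableAt_euclidean (𝕜 := ℝ)).1 hf j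

lemma norm_hvec_sq {n : ℕ} (x : EuclideanSpace ℝ (Fin n)) (c : ℝ) :
    ‖hvec x c‖ ^ 2 = ‖x‖ ^ 2 + c ^ 2 := by
  rw [EuclideanSpace.norm_eq, EuclideanSpace.norm_eq,
    Real.sq_sqrt (by positivity), Real.sq_sqrt (by positivity),
    Fin.sum_univ_castSucc]
  simp [hvec]

/-- The map `T` satisfies the Luzin N property on `U`: it maps null subsets of `U` to
null sets. -/
theorem Tmap_luzinN (n : ℕ) (hn : 1 ≤ n) (L : ℝ) (hL : 0 < L)
    (k0 : ℝ → ℝ) (s : ℝ → EuclideanSpace ℝ (Fin (n + 1)))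
    (R : ℝ → EuclideanSpace ℝ (Fin (n + 1)) →L[ℝ] EuclideanSpace ℝ (Fin (n + 1)))
    (hk0pos : ∀ t ∈ Set.Icc (0 : ℝ) L, 0 < k0 t)
    (hk0bdd : ∃ M : ℝ, ∀ t ∈ Set.Icc (0 : ℝ) L, k0 t ≤ M)
    (hs : ∀ t ∈ Set.Icc (0 : ℝ) L, ‖s t‖ = 1)
    (hR : ∀ t ∈ Set.Icc (0 : ℝ) L,
      (ContinuousLinearMap.adjoint (R t)).comp (R t) =
        ContinuousLinearMap.id ℝ (EuclideanSpace ℝ (Fin (n + 1))) ∧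
      LinearMap.det ((R t) : EuclideanSpace ℝ (Fin (n + 1)) →ₗ[ℝ] EuclideanSpace ℝ (Fin (n + 1)))
        = 1)
    (hC1 : ∃ (Ex : Finset ℝ) (M : ℝ), ∀ t ∈ Set.Icc (0 : ℝ) L \ (Ex : Set ℝ),
      (ContDiffAt ℝ 1 k0 t ∧ |deriv k0 t| ≤ M) ∧
      (ContDiffAt ℝ 1 s t ∧ ‖deriv s t‖ ≤ M) ∧
      (ContDiffAt ℝ 1 R t ∧ ‖deriv R t‖ ≤ M)) :
    ∀ E : Set (EuclideanSpace ℝ (Fin (n + 1))), E ⊆ Uset L k0 → volume E = 0 →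
      volume (Tmap k0 s R '' E) = 0 := by
  obtain ⟨Ex, M, hEx⟩ := hC1
  intro E hEU hE0
  have hTsub : Tmap k0 s R '' E ⊆
      (Tmap k0 s R '' (E ∩ {z | tlast z ∉ (Ex : Set ℝ)})) ∪
      ⋃ c ∈ (Ex : Set ℝ), (fun v => R c (v - k0 c • s c)) '' Metric.sphere 0 (k0 c) := by
    rintro w ⟨z, hzE, rfl⟩
    by_cases hc : tlast z ∈ (Ex : Set ℝ)
    · right
      refine Set.mem_biUnion hc ?_
      set c := tlast z
      have hzU := hEU hzE
      have hcL : c ∈ Set.Icc (0:ℝ) L := hzU.1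
      have hx : ‖xpart z‖ < k0 c := hzU.2
      have hk0c : (0:ℝ) < k0 c := hk0pos c hcL
      refine ⟨hvec (xpart z) (Real.sqrt ((k0 c) ^ 2 - ‖xpart z‖ ^ 2)), ?_, rfl⟩
      rw [mem_sphere_iff_norm, sub_zero]
      have hnn : (0:ℝ) ≤ (k0 c) ^ 2 - ‖xpart z‖ ^ 2 := by
        nlinarith [norm_nonneg (xpart z)]
      have h2 : ‖hvec (xpart z) (Real.sqrt ((k0 c) ^ 2 - ‖xpart z‖ ^ 2))‖ ^ 2 = (k0 c) ^ 2 := by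
        rw [norm_hvec_sq, Real.sq_sqrt hnn]; ring
      have h3 := congrArg Real.sqrt h2
      rwa [Real.sqrt_sq (norm_nonneg _), Real.sqrt_sq hk0c.le] at h3
    · exact Or.inl ⟨z, ⟨hzE, hc⟩, rfl⟩
  refine measure_mono_null hTsub (measure_union_null ?_ ?_)
  · -- good part: Tmap is differentiable there
    refine addHaar_image_eq_zero_of_differentiableOn_of_addHaar_eq_zero volume ?_
      (measure_mono_null Set.inter_subset_left hE0)
    intro z hz
    have hzU := hEU hz.1
    set t := tlast z with ht
    have htL : t ∈ Set.Icc (0:ℝ) L := hzU.1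
    obtain ⟨⟨hk0d, -⟩, ⟨hsd, -⟩, ⟨hRd, -⟩⟩ := hEx t ⟨htL, hz.2⟩
    have htl : DifferentiableAt ℝ (tlast (n := n)) z := differentiable_tlast.differentiableAt
    have hk0t : DifferentiableAt ℝ (fun w => k0 (tlast w)) z :=
      (hk0d.differentiableAt one_ne_zero).comp z htl
    have hnsq : DifferentiableAt ℝ (fun w => ‖xpart w‖ ^ 2) z :=
      (differentiable_xpart.differentiableAt (x := z)).norm_sq ℝ
    have hq : DifferentiableAt ℝ (fun w => (k0 (tlast w)) ^ 2 - ‖xpart w‖ ^ 2) z :=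
      (hk0t.pow 2).sub hnsq
    have hqpos : (0:ℝ) < (k0 (tlast z)) ^ 2 - ‖xpart z‖ ^ 2 := by
      have hx : ‖xpart z‖ < k0 t := hzU.2
      have hk0t' : (0:ℝ) < k0 t := hk0pos t htL
      nlinarith [norm_nonneg (xpart z)]
    have hsqrt : DifferentiableAt ℝ
        (fun w => Real.sqrt ((k0 (tlast w)) ^ 2 - ‖xpart w‖ ^ 2)) z :=
      hq.sqrt hqpos.ne'
    have hhv : DifferentiableAt ℝ
        (fun w => hvec (xpart w) (Real.sqrt ((k0 (tlast w)) ^ 2 - ‖xpart w‖ ^ 2))) z :=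
      differentiableAt_hvec_comp differentiable_xpart.differentiableAt hsqrt
    have hks : DifferentiableAt ℝ (fun w => k0 (tlast w) • s (tlast w)) z :=
      hk0t.smul ((hsd.differentiableAt one_ne_zero).comp z htl)
    have hRt : DifferentiableAt ℝ (fun w => R (tlast w)) z :=
      (hRd.differentiableAt one_ne_zero).comp z htl
    exact (hRt.clm_apply (hhv.sub hks)).differentiableWithinAt
  · -- bad part: union of images of spheres under affine maps
    refine (measure_biUnion_null_iff Ex.countable_toSet).mpr fun c _ => ?_
    refine addHaar_image_eq_zero_of_differentiableOn_of_addHaar_eq_zero volume ?_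
      (Measure.addHaar_sphere volume 0 (k0 c))
    exact (((R c).differentiable).comp (differentiable_id.sub_const _)).differentiableOn

end
end
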